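/- Assume K ≥ 4 and N ≥ 4. For a uniformly random labeling L and any pairwise distinct s₁, s₂, s₃, s₄ ∈ {1,…,K}, the covariance of the cross-counts satisfies Cov(a_{s₁s₂}, a_{s₃s₄}) = 2·N_{s₁}N_{s₂}N_{s₃}N_{s₄}/((N−1)²(N−3)). -/

import Mathlib

open Finset Filter MeasureTheory ProbabilityTheory Topology

namespace Crossmatch

/-- First endpoint (index `2j`, i.e., the paper's `2j-1` in 1-based indexing) of the `j`-th
matched pair in the fixed perfect matching on `{1, …, 2I}`. -/
def ep1 {I : ℕ} (j : Fin I) : Fin (2 * I) := ⟨2 * j.val, by have := j.isLt; omega⟩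

/-- Second endpoint (index `2j+1`, i.e., the paper's `2j`) of the `j`-th matched pair. -/
def ep2 {I : ℕ} (j : Fin I) : Fin (2 * I) := ⟨2 * j.val + 1, by have := j.isLt; omega⟩

/-- The set of labelings `L : {1,…,2I} → {1,…,K}` assigning label `s` to exactly `Nc s`
indices, for every `s`. -/
def labelings (I K : ℕ) (Nc : Fin K → ℕ) : Finset (Fin (2 * I) → Fin K) :=
  univ.filter fun L => ∀ s : Fin K, (univ.filter fun i => L i = s).card = Nc s

/-- The count `a_{st}(L)`: the number of matched pairs `j` with `{L(2j-1), L(2j)} = {s,t}`.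
For `s ≠ t` this is the cross-count; for `s = t` it is the pure count (both endpoints labeled
`s`). -/
def crossCount (I K : ℕ) (L : Fin (2 * I) → Fin K) (s t : Fin K) : ℕ :=
  (univ.filter fun j : Fin I =>
    ({L (ep1 j), L (ep2 j)} : Finset (Fin K)) = ({s, t} : Finset (Fin K))).card

/-- Expectation of a real-valued statistic under a uniformly random labeling. -/
noncomputable def expct (I K : ℕ) (Nc : Fin K → ℕ)
    (X : (Fin (2 * I) → Fin K) → ℝ) : ℝ :=
  (∑ L ∈ labelings I K Nc, X L) / ((labelings I K Nc).card : ℝ)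

open Classical in
/-- Probability of an event under a uniformly random labeling. -/
noncomputable def pr (I K : ℕ) (Nc : Fin K → ℕ)
    (ev : (Fin (2 * I) → Fin K) → Prop) : ℝ :=
  (((labelings I K Nc).filter ev).card : ℝ) / ((labelings I K Nc).card : ℝ)

/-- Variance of a real-valued statistic under a uniformly random labeling. -/
noncomputable def variance (I K : ℕ) (Nc : Fin K → ℕ)
    (X : (Fin (2 * I) → Fin K) → ℝ) : ℝ :=
  expct I K Nc (fun L => (X L - expct I K Nc X) ^ 2)

/-- Covariance of two real-valued statistics under a uniformly random labeling. -/
noncomputable def covar (I K : ℕ) (Nc : Fin K → ℕ)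
    (X Y : (Fin (2 * I) → Fin K) → ℝ) : ℝ :=
  expct I K Nc (fun L => (X L - expct I K Nc X) * (Y L - expct I K Nc Y))

/-- The index set of (unordered) pairs `s < t`, indexing the cross-count vector. -/
abbrev Pairs (K : ℕ) := {q : Fin K × Fin K // q.1 < q.2}

/-- The covariance matrix of the cross-count vector `(a_{st})_{s<t}` under a uniformly
random labeling. -/
noncomputable def covMatrix (I K : ℕ) (Nc : Fin K → ℕ) :
    Matrix (Pairs K) (Pairs K) ℝ :=
  Matrix.of fun q r =>
    covar I K Nc (fun L => (crossCount I K L q.1.1 q.1.2 : ℝ))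
      (fun L => (crossCount I K L r.1.1 r.1.2 : ℝ))


/-! A uniformly random labeling is invariant under permutations of the positions, so the number
of labelings carrying prescribed distinct labels `t a` at `m` distinct positions does not depend on
the positions; double counting over all injective tuples of positions then gives the probability
`∏ₐ N_{t a} / N(N-1)⋯(N-m+1)`. Writing a cross-count as a sum of indicators over matched pairs,
`E a_{s₁s₂} = N_{s₁}N_{s₂}/(N-1)`, while `E (a_{s₁s₂} a_{s₃s₄})` only gets contributions from the
`I(I-1)` ordered pairs of distinct matched pairs, each with probability
`4 N_{s₁}N_{s₂}N_{s₃}N_{s₄}/(N(N-1)(N-2)(N-3))`, which sums to `N_{s₁}N_{s₂}N_{s₃}N_{s₄}/((N-1)(N-3))`.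
Finally `1/((N-1)(N-3)) - 1/(N-1)² = 2/((N-1)²(N-3))`. -/

theorem _root_.Finset.pair_eq_pair_iff {α : Type*} [DecidableEq α] {x y z w : α} :
    ({x, y} : Finset α) = {z, w} ↔ x = z ∧ y = w ∨ x = w ∧ y = z := by
  rw [← coe_inj, coe_pair, coe_pair, Set.pair_eq_pair_iff]

theorem _root_.Nat.cast_descFactorial_four {S : Type*} [CommRing S] (n : ℕ) :
    (n.descFactorial 4 : S) = n * (n - 1) * (n - 2) * (n - 3) := by
  rcases lt_or_ge n 3 with hn | hn
  · interval_cases n <;> simp [Nat.descFactorial]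
  · rw [Nat.cast_descFactorial]
    simp [ascPochhammer_succ_eval, Nat.cast_sub hn]
    ring

lemma injective_vecCons_two {α : Type*} {a b : α} (h : a ≠ b) : Function.Injective ![a, b] := by
  intro x y
  fin_cases x <;> fin_cases y <;> simp [h, h.symm]

lemma injective_vecCons_four {α : Type*} {a b c d : α} (hab : a ≠ b) (hac : a ≠ c) (had : a ≠ d)
    (hbc : b ≠ c) (hbd : b ≠ d) (hcd : c ≠ d) : Function.Injective ![a, b, c, d] := by
  intro x y
  fin_cases x <;> fin_cases y <;> simp [*, eq_comm]

theorem exists_perm_apply_eq_of_injective {α : Type*} {m : ℕ} {v w : Fin m → α}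
    (hv : Function.Injective v) (hw : Function.Injective w) :
    ∃ σ : Equiv.Perm α, ∀ a, σ (v a) = w a := by
  classical
  let e := (Equiv.ofInjective v hv).symm.trans (Equiv.ofInjective w hw)
  have : Finite {x | x ∈ Set.range v} := Set.finite_range v
  refine ⟨e.extendSubtype, fun a => ?_⟩
  rw [Equiv.extendSubtype_apply_of_mem e _ (Set.mem_range_self a)]
  simp [e, Equiv.ofInjective_symm_apply]

section

variable {I K : ℕ} {Nc : Fin K → ℕ}

lemma comp_perm_mem_labelings (σ : Equiv.Perm (Fin (2 * I))) {L : Fin (2 * I) → Fin K}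
    (hL : L ∈ labelings I K Nc) : L ∘ σ ∈ labelings I K Nc := by
  simp only [labelings, mem_filter, mem_univ, true_and] at hL ⊢
  intro s
  rw [← hL s]
  exact card_nbij' σ σ.symm (by simp [Set.MapsTo]) (by simp [Set.MapsTo])
    (fun x _ => σ.symm_apply_apply x) (fun x _ => σ.apply_symm_apply x)

lemma card_filter_forall_eq_of_injective {m : ℕ} {v w : Fin m → Fin (2 * I)}
    (hv : Function.Injective v) (hw : Function.Injective w) (t : Fin m → Fin K) :
    #{L ∈ labelings I K Nc | ∀ a, L (v a) = t a} = #{L ∈ labelings I K Nc | ∀ a, L (w a) = t a} := by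
  obtain ⟨σ, hσ⟩ := exists_perm_apply_eq_of_injective hw hv
  refine card_nbij' (· ∘ σ) (· ∘ σ.symm) (fun L hL => ?_) (fun L hL => ?_) (fun L _ => ?_)
    (fun L _ => ?_)
  · simp only [coe_filter, Set.mem_ofPred_eq] at hL ⊢
    exact ⟨comp_perm_mem_labelings σ hL.1, fun a => by simp [hσ, hL.2]⟩
  · simp only [coe_filter, Set.mem_ofPred_eq] at hL ⊢
    refine ⟨comp_perm_mem_labelings σ.symm hL.1, fun a => ?_⟩
    simpa [← hσ a] using hL.2 a
  · ext; simp
  · ext; simp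

lemma card_filter_forall_mul_descFactorial {m : ℕ} {v : Fin m → Fin (2 * I)}
    (hv : Function.Injective v) {t : Fin m → Fin K} (ht : Function.Injective t) :
    #{L ∈ labelings I K Nc | ∀ a, L (v a) = t a} * (2 * I).descFactorial m
      = #(labelings I K Nc) * ∏ a, Nc (t a) := by
  set Inj : Finset (Fin m → Fin (2 * I)) := {u | Function.Injective u}
  have card_Inj : #Inj = (2 * I).descFactorial m := by
    rw [← Fintype.card_subtype,
      Fintype.card_congr (Equiv.subtypeInjectiveEquivEmbedding _ _), Fintype.card_embedding_eq]
    simp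
  -- Injectivity of `u` is automatic, since `t` is injective.
  have card_fiber : ∀ L ∈ labelings I K Nc, #{u ∈ Inj | ∀ a, L (u a) = t a} = ∏ a, Nc (t a) := by
    intro L hL
    have hfiber : {u ∈ Inj | ∀ a, L (u a) = t a} = Fintype.piFinset fun a => {i | L i = t a} := by
      ext u
      simp only [Inj, mem_filter, mem_univ, true_and, Fintype.mem_piFinset]
      exact ⟨And.right, fun h => ⟨fun a b hab => ht (by rw [← h a, ← h b, hab]), h⟩⟩
    simp only [labelings, mem_filter, mem_univ, true_and] at hL
    simp [hfiber, Fintype.card_piFinset, hL]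
  calc #{L ∈ labelings I K Nc | ∀ a, L (v a) = t a} * (2 * I).descFactorial m
      = ∑ u ∈ Inj, #{L ∈ labelings I K Nc | ∀ a, L (u a) = t a} := by
        rw [sum_congr rfl fun u hu =>
          card_filter_forall_eq_of_injective (mem_filter.1 hu).2 hv t, sum_const, card_Inj,
          smul_eq_mul, mul_comm]
    _ = ∑ L ∈ labelings I K Nc, #{u ∈ Inj | ∀ a, L (u a) = t a} := by
        simp only [card_filter]
        exact sum_comm
    _ = #(labelings I K Nc) * ∏ a, Nc (t a) := by
        rw [sum_congr rfl card_fiber, sum_const, smul_eq_mul]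

lemma labelings_nonempty (hNsum : ∑ s, Nc s = 2 * I) : (labelings I K Nc).Nonempty := by
  have hcard : Fintype.card (Σ s : Fin K, Fin (Nc s)) = Fintype.card (Fin (2 * I)) := by
    simp [hNsum]
  let e := Fintype.equivOfCardEq hcard
  refine ⟨fun i => (e.symm i).1, ?_⟩
  simp only [labelings, mem_filter, mem_univ, true_and]
  intro s
  calc #{i | (e.symm i).1 = s} = #{p : Σ r : Fin K, Fin (Nc r) | p.1 = s} :=
        card_equiv e.symm (by simp)
    _ = #(univ.map ⟨Sigma.mk s, sigma_mk_injective⟩) := by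
        congr 1
        ext ⟨r, x⟩
        simp only [mem_filter, mem_univ, true_and, Finset.mem_map, Function.Embedding.coeFn_mk]
        constructor
        · rintro rfl
          exact ⟨x, rfl⟩
        · rintro ⟨y, ⟨⟩⟩
          rfl
    _ = Nc s := by simp

lemma covar_eq_expct_mul_sub_mul (hlab : (labelings I K Nc).Nonempty)
    (X Y : (Fin (2 * I) → Fin K) → ℝ) :
    covar I K Nc X Y = expct I K Nc (fun L => X L * Y L) - expct I K Nc X * expct I K Nc Y := by
  have hC : (#(labelings I K Nc) : ℝ) ≠ 0 := by exact_mod_cast hlab.card_pos.ne'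
  simp only [covar, expct, sub_mul, mul_sub, sum_sub_distrib, ← sum_mul, ← mul_sum, sum_const,
    nsmul_eq_mul]
  field_simp
  ring

lemma expct_sum {ι : Type*} (J : Finset ι) (f : ι → (Fin (2 * I) → Fin K) → ℝ) :
    expct I K Nc (fun L => ∑ j ∈ J, f j L) = ∑ j ∈ J, expct I K Nc (f j) := by
  simp only [expct, ← sum_div]
  rw [sum_comm]

lemma pr_eq_card_div (p : (Fin (2 * I) → Fin K) → Prop) [DecidablePred p] :
    pr I K Nc p = #{L ∈ labelings I K Nc | p L} / #(labelings I K Nc) := by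
  unfold pr
  congr

lemma expct_ite_one (p : (Fin (2 * I) → Fin K) → Prop) [DecidablePred p] :
    expct I K Nc (fun L => if p L then 1 else 0) = pr I K Nc p := by
  rw [pr_eq_card_div, expct, sum_boole]

lemma pr_eq_zero {p : (Fin (2 * I) → Fin K) → Prop} (hp : ∀ L, ¬ p L) : pr I K Nc p = 0 := by
  simp [pr, hp]

lemma pr_or {p q : (Fin (2 * I) → Fin K) → Prop} (hpq : ∀ L, p L → ¬ q L) :
    pr I K Nc (fun L => p L ∨ q L) = pr I K Nc p + pr I K Nc q := by
  classical
  rw [pr_eq_card_div, pr_eq_card_div, pr_eq_card_div, ← add_div, ← Nat.cast_add,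
    ← card_union_of_disjoint (disjoint_filter.2 fun L _ => hpq L), ← filter_or]

lemma pr_forall_apply_eq (hlab : (labelings I K Nc).Nonempty) {m : ℕ} {v : Fin m → Fin (2 * I)}
    (hv : Function.Injective v) {t : Fin m → Fin K} (ht : Function.Injective t) :
    pr I K Nc (fun L => ∀ a, L (v a) = t a) = (∏ a, Nc (t a) : ℝ) / (2 * I).descFactorial m := by
  have hdesc : ((2 * I).descFactorial m : ℝ) ≠ 0 := by
    have := Fintype.card_le_of_injective v hv
    simp only [Fintype.card_fin] at this
    exact_mod_cast (Nat.descFactorial_pos.2 this).ne'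
  have hC : (#(labelings I K Nc) : ℝ) ≠ 0 := by exact_mod_cast hlab.card_pos.ne'
  rw [pr_eq_card_div, div_eq_div_iff hC hdesc, mul_comm (∏ a, _ : ℝ)]
  exact_mod_cast card_filter_forall_mul_descFactorial hv ht

lemma pr_pair_eq (hlab : (labelings I K Nc).Nonempty) {x y : Fin (2 * I)} (hxy : x ≠ y)
    {s t : Fin K} (hst : s ≠ t) :
    pr I K Nc (fun L => ({L x, L y} : Finset (Fin K)) = {s, t})
      = 2 * (Nc s * Nc t) / (2 * I).descFactorial 2 := by
  have ordered : ∀ {u w : Fin K}, u ≠ w →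
      pr I K Nc (fun L => L x = u ∧ L y = w) = Nc u * Nc w / (2 * I).descFactorial 2 := by
    intro u w huw
    simpa [Fin.forall_fin_two] using
      pr_forall_apply_eq hlab (injective_vecCons_two hxy) (injective_vecCons_two huw)
  simp_rw [Finset.pair_eq_pair_iff]
  rw [pr_or fun L h h' => hst (h.1.symm.trans h'.1), ordered hst, ordered hst.symm]
  ring

lemma pr_two_pairs_eq (hlab : (labelings I K Nc).Nonempty) {x₁ y₁ x₂ y₂ : Fin (2 * I)}
    (hpos : Function.Injective ![x₁, y₁, x₂, y₂]) {s₁ s₂ s₃ s₄ : Fin K} (h12 : s₁ ≠ s₂)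
    (h13 : s₁ ≠ s₃) (h14 : s₁ ≠ s₄) (h23 : s₂ ≠ s₃) (h24 : s₂ ≠ s₄) (h34 : s₃ ≠ s₄) :
    pr I K Nc (fun L => ({L x₁, L y₁} : Finset (Fin K)) = {s₁, s₂} ∧
        ({L x₂, L y₂} : Finset (Fin K)) = {s₃, s₄})
      = 4 * (Nc s₁ * Nc s₂ * Nc s₃ * Nc s₄) / (2 * I).descFactorial 4 := by
  have ordered : ∀ {t₁ t₂ t₃ t₄ : Fin K}, Function.Injective ![t₁, t₂, t₃, t₄] →
      pr I K Nc (fun L => (L x₁ = t₁ ∧ L y₁ = t₂) ∧ (L x₂ = t₃ ∧ L y₂ = t₄))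
        = Nc t₁ * Nc t₂ * Nc t₃ * Nc t₄ / (2 * I).descFactorial 4 := by
    intro t₁ t₂ t₃ t₄ ht
    simpa [Fin.forall_fin_succ, Fin.prod_univ_four, and_assoc] using pr_forall_apply_eq hlab hpos ht
  simp_rw [Finset.pair_eq_pair_iff, and_or_left, or_and_right]
  rw [pr_or (by grind), pr_or (by grind), pr_or (by grind),
    ordered (injective_vecCons_four h12 h13 h14 h23 h24 h34),
    ordered (injective_vecCons_four h12.symm h23 h24 h13 h14 h34),
    ordered (injective_vecCons_four h12 h14 h13 h24 h23 h34.symm),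
    ordered (injective_vecCons_four h12.symm h24 h23 h14 h13 h34.symm)]
  ring

lemma ep1_ne_ep2 (j : Fin I) : ep1 j ≠ ep2 j := by
  simp [ep1, ep2, Fin.ext_iff]

lemma injective_ep_of_ne {j k : Fin I} (hjk : j ≠ k) :
    Function.Injective ![ep1 j, ep2 j, ep1 k, ep2 k] := by
  have : (j : ℕ) ≠ k := Fin.val_ne_of_ne hjk
  intro x y
  fin_cases x <;> fin_cases y <;> simp [ep1, ep2, Fin.ext_iff] <;> omega

lemma crossCount_eq_sum (L : Fin (2 * I) → Fin K) (s t : Fin K) :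
    (crossCount I K L s t : ℝ)
      = ∑ j, if ({L (ep1 j), L (ep2 j)} : Finset (Fin K)) = {s, t} then 1 else 0 := by
  rw [crossCount, card_filter]
  push_cast
  rfl

lemma expct_crossCount (hlab : (labelings I K Nc).Nonempty) (hI : 1 ≤ I) {s t : Fin K}
    (hst : s ≠ t) :
    expct I K Nc (fun L => (crossCount I K L s t : ℝ)) = Nc s * Nc t / (2 * I - 1) := by
  simp_rw [crossCount_eq_sum, expct_sum, expct_ite_one, pr_pair_eq hlab (ep1_ne_ep2 _) hst,
    sum_const, card_univ, Fintype.card_fin, nsmul_eq_mul, Nat.cast_descFactorial_two]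
  push_cast
  field_simp

lemma expct_crossCount_mul_crossCount (hlab : (labelings I K Nc).Nonempty) (hI : 2 ≤ I)
    {s₁ s₂ s₃ s₄ : Fin K} (h12 : s₁ ≠ s₂) (h13 : s₁ ≠ s₃) (h14 : s₁ ≠ s₄) (h23 : s₂ ≠ s₃)
    (h24 : s₂ ≠ s₄) (h34 : s₃ ≠ s₄) :
    expct I K Nc (fun L => (crossCount I K L s₁ s₂ : ℝ) * crossCount I K L s₃ s₄)
      = Nc s₁ * Nc s₂ * Nc s₃ * Nc s₄ / ((2 * I - 1) * (2 * I - 3)) := by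
  have hI' : (2 : ℝ) ≤ I := by exact_mod_cast hI
  -- A single matched pair cannot carry both `{s₁, s₂}` and `{s₃, s₄}`.
  have hpr : ∀ j k : Fin I,
      pr I K Nc (fun L => ({L (ep1 j), L (ep2 j)} : Finset (Fin K)) = {s₁, s₂} ∧
        ({L (ep1 k), L (ep2 k)} : Finset (Fin K)) = {s₃, s₄})
      = if j = k then 0
        else 4 * (Nc s₁ * Nc s₂ * Nc s₃ * Nc s₄ : ℝ) / (2 * I).descFactorial 4 := by
    intro j k
    split_ifs with hjk
    · subst hjk
      refine pr_eq_zero fun L hL => ?_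
      obtain ⟨h, h'⟩ := hL
      rw [h, Finset.pair_eq_pair_iff] at h'
      exact h'.elim (fun h => h13 h.1) (fun h => h14 h.1)
    · exact pr_two_pairs_eq hlab (injective_ep_of_ne hjk) h12 h13 h14 h23 h24 h34
  simp_rw [crossCount_eq_sum, sum_mul_sum, ite_zero_mul_ite_zero, mul_one, expct_sum,
    expct_ite_one, hpr]
  simp only [sum_ite, filter_ne, sum_const_zero, sum_const, card_erase_of_mem (mem_univ _),
    card_univ, Fintype.card_fin, nsmul_eq_mul, zero_add, Nat.cast_descFactorial_four]
  push_cast [Nat.cast_sub (by omega : 1 ≤ I)]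
  have : (I : ℝ) - 1 ≠ 0 := by linarith
  have : (2 * I - 3 : ℝ) ≠ 0 := by linarith
  rw [show (2 * I - 2 : ℝ) = 2 * (I - 1) by ring]
  field_simp
  ring

end

theorem stmt5_general (K I : ℕ) (hN : 4 ≤ 2 * I)
    (Nc : Fin K → ℕ) (hNsum : ∑ s, Nc s = 2 * I)
    (s₁ s₂ s₃ s₄ : Fin K) (h12 : s₁ ≠ s₂) (h13 : s₁ ≠ s₃) (h14 : s₁ ≠ s₄)
    (h23 : s₂ ≠ s₃) (h24 : s₂ ≠ s₄) (h34 : s₃ ≠ s₄) :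
    covar I K Nc (fun L => (crossCount I K L s₁ s₂ : ℝ))
        (fun L => (crossCount I K L s₃ s₄ : ℝ))
      = 2 * ((Nc s₁ : ℝ) * (Nc s₂ : ℝ) * (Nc s₃ : ℝ) * (Nc s₄ : ℝ))
          / (((2 * I : ℝ) - 1) ^ 2 * ((2 * I : ℝ) - 3)) := by
  have hI : 2 ≤ I := by omega
  have hlab := labelings_nonempty hNsum
  rw [covar_eq_expct_mul_sub_mul hlab,
    expct_crossCount_mul_crossCount hlab hI h12 h13 h14 h23 h24 h34,
    expct_crossCount hlab (by omega) h12, expct_crossCount hlab (by omega) h34]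
  have hI' : (2 : ℝ) ≤ I := by exact_mod_cast hI
  have : (2 * I - 1 : ℝ) ≠ 0 := by linarith
  have : (2 * I - 3 : ℝ) ≠ 0 := by linarith
  field_simp
  ring

/-- null covariance of two cross-counts on disjoint classes, for pairwise
distinct `s₁, s₂, s₃, s₄` and `N ≥ 4`. -/
theorem stmt5 (K I : ℕ) (hK : 4 ≤ K) (hI : 1 ≤ I) (hN : 4 ≤ 2 * I)
    (Nc : Fin K → ℕ) (hNpos : ∀ s, 0 < Nc s) (hNsum : ∑ s, Nc s = 2 * I)
    (s₁ s₂ s₃ s₄ : Fin K) (h12 : s₁ ≠ s₂) (h13 : s₁ ≠ s₃) (h14 : s₁ ≠ s₄)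
    (h23 : s₂ ≠ s₃) (h24 : s₂ ≠ s₄) (h34 : s₃ ≠ s₄) :
    covar I K Nc (fun L => (crossCount I K L s₁ s₂ : ℝ))
        (fun L => (crossCount I K L s₃ s₄ : ℝ))
      = 2 * ((Nc s₁ : ℝ) * (Nc s₂ : ℝ) * (Nc s₃ : ℝ) * (Nc s₄ : ℝ))
          / (((2 * I : ℝ) - 1) ^ 2 * ((2 * I : ℝ) - 3)) :=
  stmt5_general K I hN Nc hNsum s₁ s₂ s₃ s₄ h12 h13 h14 h23 h24 h34

end Crossmatch
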